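/- If a term u sub-rewrites with rule l→r at position p, then u|_p is an instance of the linearized left-hand side: u|_p = l̄θ for some substitution θ such that for every variable x of l and every occurrence position p_i of x in l, θ(x^{p_i}) rewrites in zero or more R-steps to σ(x), where σ is the substitution used in the firing phase. -/
import Mathlib


/-- Finite first-order terms. -/
inductive Tm (F V : Type) : Type
  | var : V → Tm F V
  | app : F → List (Tm F V) → Tm F V

namespace Tm
variable {F V W : Type}

/-- Application of a substitution to a term. -/
def subst (σ : V → Tm F W) : Tm F V → Tm F W
  | .var x => σ x
  | .app f l => .app f (l.attach.map fun t => t.1.subst σ)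
  decreasing_by simp only [Tm.app.sizeOf_spec]; have := List.sizeOf_lt_of_mem t.2; omega

/-- Subterm of `t` at a position (a list of argument indices), if any. -/
def at? : Tm F V → List ℕ → Option (Tm F V)
  | t, [] => some t
  | .var _, _ :: _ => none
  | .app _ l, i :: p =>
    match l[i]? with
    | some t => t.at? p
    | none => none

mutual
/-- Linearization of a term: the occurrence of a variable `x` at position `p`
is renamed into the fresh variable `(x, p)`. -/
def lin : Tm F V → List ℕ → Tm F (V × List ℕ)
  | .var x, p => .var (x, p)
  | .app f l, p => .app f (linList l p 0)

def linList : List (Tm F V) → List ℕ → ℕ → List (Tm F (V × List ℕ))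
  | [], _, _ => []
  | t :: ts, p, i => lin t (p ++ [i]) :: linList ts p (i + 1)
end

/-- `x` occurs in `t`. -/
inductive HasVar (x : V) : Tm F V → Prop
  | var : HasVar x (.var x)
  | app {f l t} : t ∈ l → HasVar x t → HasVar x (.app f l)

/-- `t` is not a variable. -/
def NonVar (t : Tm F V) : Prop := ∀ z, t ≠ .var z

/-- Reflexive subterm relation. -/
inductive Sub : Tm F V → Tm F V → Prop
  | refl (t) : Sub t t
  | app {s t f l} : t ∈ l → Sub s t → Sub s (.app f l)

end Tm

variable {F V : Type}

/-- Plain one-step rewriting with the rewrite system `R` (rules instantiated by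
substitutions, closure under contexts). -/
inductive Rw (R : Set (Tm F V × Tm F V)) : Tm F V → Tm F V → Prop
  | rule {l r} (σ : V → Tm F V) : (l, r) ∈ R →
      Rw R (l.subst σ) (r.subst σ)
  | app (f : F) (pre post : List (Tm F V)) {s t} :
      Rw R s t → Rw R (.app f (pre ++ s :: post)) (.app f (pre ++ t :: post))

/-- `Shape rel l u v`: `u` rewrites to `v` (by `rel`-derivations) using steps
occurring only strictly below the non-variable positions of the pattern `l`,
i.e. `u` and `v` coincide with `l` at its non-variable positions and at each
variable position of `l` the subterm of `u` rewrites to that of `v`. -/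
inductive Shape (rel : Tm F V → Tm F V → Prop) : Tm F V → Tm F V → Tm F V → Prop
  | var (x : V) {u v : Tm F V} : Relation.ReflTransGen rel u v → Shape rel (.var x) u v
  | app (f : F) (ls us vs : List (Tm F V)) :
      ls.length = us.length → us.length = vs.length →
      (∀ i (h1 : i < ls.length) (h2 : i < us.length) (h3 : i < vs.length),
        Shape rel ls[i] us[i] vs[i]) →
      Shape rel (.app f ls) (.app f us) (.app f vs)

/-- Sub-rewriting: `u` sub-rewrites to `v` at some position `p` with rule
`l → r` if `u` rewrites (strictly below `p·FPos(l)`) to `u[lθ]_p` and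
`v = u[rθ]_p`. -/
inductive SubRw (R : Set (Tm F V × Tm F V)) : Tm F V → Tm F V → Prop
  | rule {l r u} (σ : V → Tm F V) : (l, r) ∈ R →
      Shape (Rw R) l u (l.subst σ) → SubRw R u (r.subst σ)
  | app (f : F) (pre post : List (Tm F V)) {s t} :
      SubRw R s t → SubRw R (.app f (pre ++ s :: post)) (.app f (pre ++ t :: post))

lemma subst_app {W : Type} (σ : V → Tm F W) (f : F) (l : List (Tm F V)) :
    (Tm.app f l).subst σ = .app f (l.map fun t => t.subst σ) := by
  rw [Tm.subst]; congr 1; simp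

lemma subst_congr {W : Type} {θ θ' : V → Tm F W} :
    ∀ (t : Tm F V), (∀ x, Tm.HasVar x t → θ x = θ' x) → t.subst θ = t.subst θ'
  | .var x, h => by rw [Tm.subst, Tm.subst]; exact h x .var
  | .app f l, h => by
    rw [subst_app, subst_app]
    congr 1
    apply List.map_congr_left
    intro t ht
    exact subst_congr t fun x hx => h x (.app ht hx)
  decreasing_by simp only [Tm.app.sizeOf_spec]; have := List.sizeOf_lt_of_mem ht; omega

lemma linList_length (ts : List (Tm F V)) (p : List ℕ) (i : ℕ) :
    (Tm.linList ts p i).length = ts.length := by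
  induction ts generalizing i with
  | nil => rfl
  | cons t ts ih => simp [Tm.linList, ih]

lemma linList_getElem (ts : List (Tm F V)) (p : List ℕ) (i j : ℕ)
    (h : j < ts.length) (h' : j < (Tm.linList ts p i).length) :
    (Tm.linList ts p i)[j] = Tm.lin ts[j] (p ++ [i + j]) := by
  induction ts generalizing i j with
  | nil => exact absurd h (by simp)
  | cons t ts ih =>
    cases j with
    | zero => simp [Tm.linList]
    | succ j =>
      simp only [Tm.linList, List.getElem_cons_succ]
      rw [show i + (j + 1) = (i + 1) + j by omega]
      exact ih _ _ (by simpa using h) (by simp [linList_length]; simpa using h)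

lemma linList_mem {ts : List (Tm F V)} {p : List ℕ} {i : ℕ} {t : Tm F (V × List ℕ)}
    (h : t ∈ Tm.linList ts p i) :
    ∃ (j : ℕ) (hj : j < ts.length), t = Tm.lin ts[j] (p ++ [i + j]) := by
  obtain ⟨j, hj, hje⟩ := List.getElem_of_mem h
  have hj' : j < ts.length := by rwa [linList_length] at hj
  exact ⟨j, hj', by rw [← hje, linList_getElem _ _ _ _ hj']⟩

lemma lin_hasVar_prefix :
    ∀ (t : Tm F V) (p : List ℕ) (x : V) (q : List ℕ),
      Tm.HasVar (x, q) (t.lin p) → ∃ rest, q = p ++ rest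
  | .var y, p, x, q, h => by
    cases h; exact ⟨[], by simp⟩
  | .app f l, p, x, q, h => by
    rw [Tm.lin] at h
    cases h with
    | app hmem hvar =>
      obtain ⟨j, hj, rfl⟩ := linList_mem hmem
      obtain ⟨rest, hrest⟩ := lin_hasVar_prefix l[j] (p ++ [0 + j]) x q hvar
      exact ⟨(0 + j) :: rest, by simp [hrest]⟩
  termination_by t => sizeOf t
  decreasing_by
    simp only [Tm.app.sizeOf_spec]
    have := List.sizeOf_lt_of_mem (l.getElem_mem hj)
    omega

lemma shape_key (R : Set (Tm F V × Tm F V)) :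
    ∀ {l u v : Tm F V}, Shape (Rw R) l u v → ∀ (σ : V → Tm F V), v = l.subst σ →
    ∀ p : List ℕ,
    ∃ θ : V × List ℕ → Tm F V,
      u = (Tm.lin l p).subst θ ∧
      ∀ (x : V) (q : List ℕ), Tm.HasVar (x, q) (Tm.lin l p) →
        Relation.ReflTransGen (Rw R) (θ (x, q)) (σ x) := by
  intro l u v h
  induction h with
  | var x hr =>
    intro σ hv p
    refine ⟨fun _ => _, by rw [Tm.lin, Tm.subst], ?_⟩
    rintro y q hy
    cases hy
    rw [Tm.subst] at hv
    exact hv ▸ hr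
  | app f ls us vs h1 h2 hsub ih =>
    intro σ hv p
    rw [subst_app] at hv
    injection hv with _ hv
    subst hv
    have IH : ∀ i (hi : i < ls.length),
        ∃ θ : V × List ℕ → Tm F V,
          us[i]'(h1 ▸ hi) = (Tm.lin ls[i] (p ++ [i])).subst θ ∧
          ∀ (x : V) (q : List ℕ), Tm.HasVar (x, q) (Tm.lin ls[i] (p ++ [i])) →
            Relation.ReflTransGen (Rw R) (θ (x, q)) (σ x) := by
      intro i hi
      have hi2 : i < us.length := h1 ▸ hi
      have hi3 : i < (ls.map fun t => t.subst σ).length := by simpa using hi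
      exact ih i hi hi2 hi3 σ (by simp) (p ++ [i])
    choose Θ hΘ₁ hΘ₂ using IH
    refine ⟨fun v => match v.2.drop p.length with
      | [] => σ v.1
      | j :: _ => if h : j < ls.length then Θ j h v else σ v.1, ?_, ?_⟩
    · rw [Tm.lin, subst_app]
      congr 1
      have hlen : us.length = (Tm.linList ls p 0).length := by
        rw [linList_length]; omega
      apply List.ext_getElem (by simpa using hlen)
      intro i hi hi'
      have hils : i < ls.length := by rw [linList_length] at hlen; omega
      rw [List.getElem_map, linList_getElem _ _ _ _ hils, Nat.zero_add, hΘ₁ i hils]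
      apply subst_congr
      rintro ⟨x, q⟩ hx
      obtain ⟨rest, rfl⟩ := lin_hasVar_prefix _ _ _ _ hx
      show Θ i hils (x, p ++ [i] ++ rest)
        = (match ((p ++ [i] ++ rest).drop p.length) with
        | [] => σ x
        | j :: _ => if h : j < ls.length then Θ j h (x, p ++ [i] ++ rest) else σ x)
      rw [List.append_assoc, List.singleton_append, List.drop_left]
      show Θ i hils (x, p ++ i :: rest)
        = if h : i < ls.length then Θ i h (x, p ++ i :: rest) else σ x
      rw [dif_pos hils]
    · rintro x q hx
      rw [Tm.lin] at hx
      cases hx with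
      | app hmem hvar =>
        obtain ⟨j, hj, rfl⟩ := linList_mem hmem
        rw [Nat.zero_add] at hvar
        obtain ⟨rest, rfl⟩ := lin_hasVar_prefix _ _ _ _ hvar
        show Relation.ReflTransGen (Rw R)
          (match ((p ++ [j] ++ rest).drop p.length) with
          | [] => σ x
          | i :: _ => if h : i < ls.length then Θ i h (x, p ++ [j] ++ rest) else σ x)
          (σ x)
        rw [List.append_assoc, List.singleton_append, List.drop_left]
        show Relation.ReflTransGen (Rw R)
          (if h : j < ls.length then Θ j h (x, p ++ j :: rest) else σ x) (σ x)
        rw [dif_pos hj]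
        rw [List.append_assoc, List.singleton_append] at hvar
        exact hΘ₂ j hj x _ hvar

/-- if a term `u` sub-rewrites with rule `l → r` (here: the
preparatory phase rewrites `u` into `lσ` strictly below the non-variable
positions of `l`), then `u` is an instance of the linearized left-hand side
`l̄` by some substitution `θ` such that for every variable `x` of `l` and every
occurrence position `p` of `x` in `l`, `θ(x^p)` rewrites in zero or more
`R`-steps to `σ(x)`. -/
theorem subrewriting_redex_is_linearized_instance
    (R : Set (Tm F V × Tm F V)) (l r : Tm F V) (hlr : (l, r) ∈ R)
    (u : Tm F V) (σ : V → Tm F V)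
    (hprep : Shape (Rw R) l u (l.subst σ)) :
    ∃ θ : V × List ℕ → Tm F V,
      u = (Tm.lin l []).subst θ ∧
      ∀ (x : V) (p : List ℕ), Tm.HasVar (x, p) (Tm.lin l []) →
        Relation.ReflTransGen (Rw R) (θ (x, p)) (σ x) := by
  exact shape_key R hprep σ rfl []
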